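/- arXiv:2010.12541 — 2 statements merged into one kernel-verified Lean document; each statement's English description precedes it below -/
import Mathlib

section
/- Let u be a C^1 function on an open set containing the closed parallelogram A spanned by the segment ξ = [0,l]×{0} (l>0) and a vector z = (z1,z2) with z2>0. Then |∫_{ξ+z} u dx − ∫_ξ u dx| ≤ (|z|/z2) ∫_A |∇u| dx dy, i.e. |∫_0^l u(x+z1, z2) dx − ∫_0^l u(x,0) dx| ≤ (|z|/z2) ∫_A |∇u|. -/
open Set MeasureTheory Real

noncomputable section

/-- A point of the Euclidean plane given by its two coordinates. -/
def pt (x y : ℝ) : EuclideanSpace ℝ (Fin 2) := (WithLp.equiv 2 (Fin 2 → ℝ)).symm ![x, y]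

/-!
Write `P (x, s) = x • e₁ + s • z`, so that `A = P '' ([0, l] × [0, 1])`. The fundamental theorem
of calculus along `s ↦ P (x, s)` gives `u (P (x, 1)) - u (P (x, 0)) = ∫₀¹ Du (P (x, s)) z ds`.
Integrating in `x` and bounding `|Du z| ≤ |z| ‖Du‖` bounds the left-hand side by
`|z| ∫_{[0,l]×[0,1]} ‖Du ∘ P‖`, and since `P` is linear with determinant `z2`, this integral is
`(1 / z2) ∫_A ‖Du‖`.
-/

theorem intervalIntegral_intervalIntegral_eq_setIntegral_Icc_prod
    {F : Type*} [NormedAddCommGroup F] [NormedSpace ℝ F] {f : ℝ × ℝ → F} {a b c d : ℝ}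
    (hab : a ≤ b) (hcd : c ≤ d) (hf : IntegrableOn f (Icc a b ×ˢ Icc c d)) :
    ∫ x in a..b, ∫ y in c..d, f (x, y) = ∫ q in Icc a b ×ˢ Icc c d, f q := by
  rw [Measure.volume_eq_prod, setIntegral_prod f (by rwa [← Measure.volume_eq_prod]),
    intervalIntegral.integral_of_le hab, ← integral_Icc_eq_integral_Ioc]
  refine setIntegral_congr_fun measurableSet_Icc fun x _ => ?_
  rw [intervalIntegral.integral_of_le hcd, ← integral_Icc_eq_integral_Ioc]

section Strip

variable {E F : Type*} [NormedAddCommGroup E] [NormedSpace ℝ E]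
  [NormedAddCommGroup F] [NormedSpace ℝ F] [CompleteSpace F]
  {U : Set E} {u : E → F}

theorem sub_eq_integral_fderiv_segment (hU : IsOpen U) (hu : ContDiffOn ℝ 1 u U) {a v : E}
    (hseg : ∀ s ∈ Icc (0 : ℝ) 1, a + s • v ∈ U) :
    u (a + v) - u a = ∫ s in (0 : ℝ)..1, fderiv ℝ u (a + s • v) v := by
  have hderiv : ∀ s ∈ uIcc (0 : ℝ) 1,
      HasDerivAt (fun t : ℝ => u (a + t • v)) (fderiv ℝ u (a + s • v) v) s := by
    intro s hs
    rw [uIcc_of_le zero_le_one] at hs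
    have hdu : DifferentiableAt ℝ u (a + s • v) :=
      (hu.differentiableOn one_ne_zero).differentiableAt (hU.mem_nhds (hseg s hs))
    simpa [Function.comp_def] using
      hdu.hasFDerivAt.comp_hasDerivAt s (((hasDerivAt_id s).smul_const v).const_add a)
  have hcont : ContinuousOn (fun s : ℝ => fderiv ℝ u (a + s • v) v) (uIcc 0 1) := by
    rw [uIcc_of_le zero_le_one]
    exact ((hu.continuousOn_fderiv_of_isOpen hU le_rfl).comp (by fun_prop) hseg).clm_apply
      continuousOn_const
  simpa using (intervalIntegral.integral_eq_sub_of_hasDerivAt hderiv hcont.intervalIntegrable).symm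

variable {w v : E} {l : ℝ}

theorem integral_translate_sub_eq_setIntegral_fderiv (hU : IsOpen U) (hu : ContDiffOn ℝ 1 u U)
    (hl : 0 ≤ l) (hR : ∀ q ∈ Icc 0 l ×ˢ Icc (0 : ℝ) 1, q.1 • w + q.2 • v ∈ U) :
    (∫ x in (0 : ℝ)..l, u (x • w + v)) - ∫ x in (0 : ℝ)..l, u (x • w) =
      ∫ q in Icc 0 l ×ˢ Icc (0 : ℝ) 1, fderiv ℝ u (q.1 • w + q.2 • v) v := by
  have hedge : ∀ s ∈ Icc (0 : ℝ) 1,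
      IntervalIntegrable (fun x : ℝ => u (x • w + s • v)) volume 0 l := by
    intro s hs
    refine (hu.continuousOn.comp (by fun_prop) fun x hx => ?_).intervalIntegrable
    exact hR (x, s) ⟨by rwa [uIcc_of_le hl] at hx, hs⟩
  have hD : ContinuousOn (fun q : ℝ × ℝ => fderiv ℝ u (q.1 • w + q.2 • v) v)
      (Icc 0 l ×ˢ Icc (0 : ℝ) 1) :=
    ((hu.continuousOn_fderiv_of_isOpen hU le_rfl).comp (by fun_prop) hR).clm_apply
      continuousOn_const
  have hFTC : ∀ x ∈ uIcc 0 l,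
      u (x • w + v) - u (x • w) = ∫ s in (0 : ℝ)..1, fderiv ℝ u (x • w + s • v) v :=
    fun x hx => by
      simpa using sub_eq_integral_fderiv_segment hU hu fun s hs =>
        hR (x, s) ⟨by rwa [uIcc_of_le hl] at hx, hs⟩
  rw [← intervalIntegral.integral_sub (by simpa using hedge 1 (by simp))
    (by simpa using hedge 0 (by simp)), intervalIntegral.integral_congr hFTC]
  exact intervalIntegral_intervalIntegral_eq_setIntegral_Icc_prod hl zero_le_one
    (hD.integrableOn_compact (isCompact_Icc.prod isCompact_Icc))

theorem norm_integral_translate_sub_le (hU : IsOpen U) (hu : ContDiffOn ℝ 1 u U)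
    (hl : 0 ≤ l) (hR : ∀ q ∈ Icc 0 l ×ˢ Icc (0 : ℝ) 1, q.1 • w + q.2 • v ∈ U) :
    ‖(∫ x in (0 : ℝ)..l, u (x • w + v)) - ∫ x in (0 : ℝ)..l, u (x • w)‖ ≤
      ‖v‖ * ∫ q in Icc 0 l ×ˢ Icc (0 : ℝ) 1, ‖fderiv ℝ u (q.1 • w + q.2 • v)‖ := by
  have hD : ContinuousOn (fun q : ℝ × ℝ => ‖fderiv ℝ u (q.1 • w + q.2 • v)‖)
      (Icc 0 l ×ˢ Icc (0 : ℝ) 1) :=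
    ((hu.continuousOn_fderiv_of_isOpen hU le_rfl).comp (by fun_prop) hR).norm
  rw [integral_translate_sub_eq_setIntegral_fderiv hU hu hl hR, ← integral_const_mul]
  refine norm_integral_le_of_norm_le
    ((hD.integrableOn_compact (isCompact_Icc.prod isCompact_Icc)).const_mul _) ?_
  exact Filter.Eventually.of_forall fun q => ((fderiv ℝ u _).le_opNorm v).trans_eq (mul_comm _ _)

end Strip

def linearMapOfColumns (w v : EuclideanSpace ℝ (Fin 2)) :
    EuclideanSpace ℝ (Fin 2) →L[ℝ] EuclideanSpace ℝ (Fin 2) :=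
  (EuclideanSpace.proj 0).smulRight w + (EuclideanSpace.proj 1).smulRight v

@[simp]
theorem linearMapOfColumns_apply (w v p : EuclideanSpace ℝ (Fin 2)) :
    linearMapOfColumns w v p = p 0 • w + p 1 • v := rfl

theorem det_linearMapOfColumns (w v : EuclideanSpace ℝ (Fin 2)) :
    (linearMapOfColumns w v).det = w 0 * v 1 - w 1 * v 0 := by
  rw [ContinuousLinearMap.det, ← LinearMap.det_toMatrix (PiLp.basisFun 2 ℝ (Fin 2))]
  have : LinearMap.toMatrix (PiLp.basisFun 2 ℝ (Fin 2)) (PiLp.basisFun 2 ℝ (Fin 2))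
      (linearMapOfColumns w v : _ →ₗ[ℝ] _) = !![w 0, v 0; w 1, v 1] := by
    ext i j
    fin_cases i <;> fin_cases j <;> simp [LinearMap.toMatrix_apply]
  rw [this, Matrix.det_fin_two_of]
  ring

theorem setIntegral_image_linearCombination {F : Type*} [NormedAddCommGroup F] [NormedSpace ℝ F]
    {w v : EuclideanSpace ℝ (Fin 2)} (hdet : w 0 * v 1 - w 1 * v 0 ≠ 0) {S : Set (ℝ × ℝ)}
    (hS : MeasurableSet S) (g : EuclideanSpace ℝ (Fin 2) → F) :
    ∫ p in (fun q : ℝ × ℝ => q.1 • w + q.2 • v) '' S, g p =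
      |w 0 * v 1 - w 1 * v 0| • ∫ q in S, g (q.1 • w + q.2 • v) := by
  set T := linearMapOfColumns w v
  let ψ : ℝ × ℝ ≃ᵐ EuclideanSpace ℝ (Fin 2) :=
    MeasurableEquiv.finTwoArrow.symm.trans (MeasurableEquiv.toLp 2 (Fin 2 → ℝ))
  have hψ : MeasurePreserving ψ :=
    (PiLp.volume_preserving_toLp (Fin 2)).comp
      ((volume_preserving_finTwoArrow ℝ).symm MeasurableEquiv.finTwoArrow)
  have hTψ : ∀ q, T (ψ q) = q.1 • w + q.2 • v := fun q => by simp [T, ψ]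
  have hinj : Function.Injective T := by
    have : IsUnit (T : Module.End ℝ (EuclideanSpace ℝ (Fin 2))) := by
      rw [LinearMap.isUnit_iff_isUnit_det, ← ContinuousLinearMap.det, det_linearMapOfColumns]
      exact hdet.isUnit
    exact ((Module.End.isUnit_iff _).mp this).injective
  rw [show (fun q : ℝ × ℝ => q.1 • w + q.2 • v) '' S = T '' (ψ '' S) by
      rw [image_image]; simp_rw [hTψ],
    integral_image_eq_integral_abs_det_fderiv_smul volume (ψ.measurableSet_image.mpr hS)
      (fun p _ => T.hasFDerivAt.hasFDerivWithinAt) hinj.injOn g,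
    hψ.setIntegral_image_emb ψ.measurableEmbedding]
  simp only [hTψ, show T.det = _ from det_linearMapOfColumns w v]
  exact integral_smul _ _

@[simp]
theorem pt_apply_zero (x y : ℝ) : pt x y 0 = x := rfl

@[simp]
theorem pt_apply_one (x y : ℝ) : pt x y 1 = y := rfl

theorem norm_pt (x y : ℝ) : ‖pt x y‖ = √(x ^ 2 + y ^ 2) := by
  simp [EuclideanSpace.norm_eq, Fin.sum_univ_two]

theorem smul_pt (a x y : ℝ) : a • pt x y = pt (a * x) (a * y) := by
  ext i; fin_cases i <;> simp

theorem pt_add_pt (x y x' y' : ℝ) : pt x y + pt x' y' = pt (x + x') (y + y') := by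
  ext i; fin_cases i <;> simp

/-- Translation estimate: for `u` of class `C¹` on an open set containing the closed
parallelogram `A` spanned by the segment `ξ = [0,l] × {0}` and the vector `z = (z1, z2)`
with `z2 > 0`, the difference of the integrals of `u` over `ξ + z` and over `ξ` is bounded
by `(|z|/z2) ∫_A |∇u|`. -/
theorem translation_estimate (l z1 z2 : ℝ) (hl : 0 < l) (hz2 : 0 < z2)
    (A : Set (EuclideanSpace ℝ (Fin 2)))
    (hA : A = {p | ∃ x ∈ Icc (0:ℝ) l, ∃ s ∈ Icc (0:ℝ) 1, p = pt (x + s * z1) (s * z2)})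
    (U : Set (EuclideanSpace ℝ (Fin 2))) (hU : IsOpen U) (hAU : A ⊆ U)
    (u : EuclideanSpace ℝ (Fin 2) → ℝ) (hu : ContDiffOn ℝ 1 u U) :
    |(∫ x in (0:ℝ)..l, u (pt (x + z1) z2)) - ∫ x in (0:ℝ)..l, u (pt x 0)|
      ≤ (Real.sqrt (z1 ^ 2 + z2 ^ 2) / z2) * ∫ p in A, ‖fderiv ℝ u p‖ := by
  have hA' : A = (fun q : ℝ × ℝ => pt (q.1 + q.2 * z1) (q.2 * z2)) '' Icc 0 l ×ˢ Icc 0 1 := by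
    ext p; rw [hA]; constructor
    · rintro ⟨x, hx, s, hs, rfl⟩; exact ⟨(x, s), ⟨hx, hs⟩, rfl⟩
    · rintro ⟨⟨x, s⟩, ⟨hx, hs⟩, rfl⟩; exact ⟨x, hx, s, hs, rfl⟩
  have hbound := norm_integral_translate_sub_le (w := pt 1 0) (v := pt z1 z2) hU hu hl.le
    fun q hq => by simpa [smul_pt, pt_add_pt] using hAU (hA' ▸ mem_image_of_mem _ hq)
  have hchange := setIntegral_image_linearCombination (w := pt 1 0) (v := pt z1 z2)
    (S := Icc 0 l ×ˢ Icc 0 1) (by simpa using hz2.ne')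
    (measurableSet_Icc.prod measurableSet_Icc) (‖fderiv ℝ u ·‖)
  simp only [smul_pt, pt_add_pt, mul_one, mul_zero, zero_add, norm_pt, Real.norm_eq_abs,
    pt_apply_zero, pt_apply_one, one_mul, zero_mul, sub_zero, abs_of_pos hz2, smul_eq_mul]
    at hbound hchange
  rw [hA', hchange]
  convert hbound using 1
  field_simp
end
end

section
/- Poincaré inequality on bounded connected patterns: let Γ = ∪_{i=1}^N γ_i be a finite union of C^1 arcs of finite total length l > 0, such that Γ is connected (any two points of Γ are joined by a piecewise C^1 path along arcs). Then for every u that is H^1 on each arc with matching values at intersection points, ∫_Γ (u − ⟨u⟩)² ds ≤ l² ∫_Γ u_s² ds, where ⟨u⟩ = (1/l)∫_Γ u ds. -/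
/-!
By the fundamental theorem of calculus, `u` oscillates on the arc `γᵢ` by at most
`∫ |(u ∘ γᵢ)'|`. The arcs are closed and their union is connected, so their intersection graph is
connected; chaining these bounds along a simple path of arcs, which uses each arc at most once,
shows that `u` oscillates on `Γ` by at most `D = ∑ᵢ ∫ |(u ∘ γᵢ)'|`. Hence `u` stays within `D`
of its mean, the left side is at most `l D²`, and `D² ≤ l ∫_Γ u_s²` by Cauchy–Schwarz.
-/

open Set MeasureTheory Real

theorem sq_integral_le_mul_integral_sq {f : ℝ → ℝ} {a b : ℝ} (hab : a ≤ b)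
    (hf : IntervalIntegrable f volume a b)
    (hf2 : IntervalIntegrable (fun x => f x ^ 2) volume a b) :
    (∫ x in a..b, f x) ^ 2 ≤ (b - a) * ∫ x in a..b, f x ^ 2 := by
  -- `0 ≤ ∫ (f - c)²` for every `c`: a quadratic in `c` with nonpositive discriminant
  have hquad : ∀ c : ℝ,
      0 ≤ (b - a) * (c * c) + (-2 * ∫ x in a..b, f x) * c + ∫ x in a..b, f x ^ 2 := by
    intro c
    have hexpand : ∫ x in a..b, (f x - c) ^ 2 =
        (b - a) * (c * c) + (-2 * ∫ x in a..b, f x) * c + ∫ x in a..b, f x ^ 2 := by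
      simp_rw [sub_sq]
      have h2fc : IntervalIntegrable (fun x => 2 * f x * c) volume a b :=
        (hf.const_mul 2).mul_const c
      rw [intervalIntegral.integral_add (hf2.sub h2fc) intervalIntegrable_const,
        intervalIntegral.integral_sub hf2 h2fc, intervalIntegral.integral_mul_const,
        intervalIntegral.integral_const_mul, intervalIntegral.integral_const, smul_eq_mul]
      ring
    exact hexpand ▸ intervalIntegral.integral_nonneg hab fun x _ => sq_nonneg _
  have := discrim_le_zero hquad
  rw [discrim] at this
  linarith

theorem sq_sum_integral_abs_le {ι : Type*} [Fintype ι] {L : ι → ℝ} (hL : ∀ i, 0 ≤ L i)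
    {f : ι → ℝ → ℝ} (hf : ∀ i, ContinuousOn (f i) (Icc 0 (L i))) :
    (∑ i, ∫ t in (0)..(L i), |f i t|) ^ 2 ≤ (∑ i, L i) * ∑ i, ∫ t in (0)..(L i), f i t ^ 2 := by
  refine Finset.sum_sq_le_sum_mul_sum_of_sq_le_mul _ (fun i _ => hL i)
    (fun i _ => intervalIntegral.integral_nonneg (hL i) fun _ _ => sq_nonneg _) fun i _ => ?_
  have h := sq_integral_le_mul_integral_sq (hL i) ((hf i).abs.intervalIntegrable_of_Icc (hL i))
    (((hf i).abs.pow 2).intervalIntegrable_of_Icc (hL i))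
  simpa only [sq_abs, sub_zero] using h

theorem integral_sq_le_of_abs_le {g : ℝ → ℝ} {a b D : ℝ} (hab : a ≤ b)
    (hg : ∀ x ∈ Icc a b, |g x| ≤ D) :
    ∫ x in a..b, g x ^ 2 ≤ (b - a) * D ^ 2 := by
  have hbound : ∀ x ∈ uIoc a b, ‖g x ^ 2‖ ≤ D ^ 2 := fun x hx => by
    rw [uIoc_of_le hab] at hx
    rw [norm_pow, norm_eq_abs]
    exact pow_le_pow_left₀ (abs_nonneg _) (hg x (Ioc_subset_Icc_self hx)) 2
  calc ∫ x in a..b, g x ^ 2 ≤ ‖∫ x in a..b, g x ^ 2‖ := le_norm_self _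
    _ ≤ D ^ 2 * |b - a| := intervalIntegral.norm_integral_le_of_norm_le_const hbound
    _ = (b - a) * D ^ 2 := by rw [abs_of_nonneg (sub_nonneg.2 hab), mul_comm]

theorem abs_sub_le_integral_abs_derivWithin {f : ℝ → ℝ} {a b s t : ℝ} (hab : a < b)
    (hf : ContDiffOn ℝ 1 f (Icc a b)) (hs : s ∈ Icc a b) (ht : t ∈ Icc a b) :
    |f t - f s| ≤ ∫ x in a..b, |derivWithin f (Icc a b) x| := by
  wlog hst : s ≤ t generalizing s t
  · rw [abs_sub_comm]
    exact this ht hs (le_of_not_ge hst)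
  have hf' : ContinuousOn (derivWithin f (Icc a b)) (Icc a b) :=
    hf.continuousOn_derivWithin (uniqueDiffOn_Icc hab) le_rfl
  have hsub : Icc s t ⊆ Icc a b := Icc_subset_Icc hs.1 ht.2
  have hderiv : ∀ x ∈ Ioo s t, HasDerivAt f (derivWithin f (Icc a b) x) x := fun x hx => by
    have hx' : x ∈ Ioo a b := ⟨hs.1.trans_lt hx.1, hx.2.trans_le ht.2⟩
    exact (hf.differentiableOn one_ne_zero x (Ioo_subset_Icc_self hx')).hasDerivWithinAt
      |>.hasDerivAt (Icc_mem_nhds hx'.1 hx'.2)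
  have hFTC : ∫ x in s..t, derivWithin f (Icc a b) x = f t - f s :=
    intervalIntegral.integral_eq_sub_of_hasDerivAt_of_le hst (hf.continuousOn.mono hsub) hderiv
      ((hf'.mono hsub).intervalIntegrable_of_Icc hst)
  calc |f t - f s| = |∫ x in s..t, derivWithin f (Icc a b) x| := by rw [hFTC]
    _ ≤ ∫ x in s..t, |derivWithin f (Icc a b) x| :=
      intervalIntegral.abs_integral_le_integral_abs hst
    _ ≤ ∫ x in a..b, |derivWithin f (Icc a b) x| :=
      intervalIntegral.integral_mono_interval hs.1 hst ht.2
        (.of_forall fun _ => abs_nonneg _) (hf'.abs.intervalIntegrable_of_Icc hab.le)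

theorem abs_sub_sum_integral_div_le {ι : Type*} [Fintype ι] {L : ι → ℝ} (hL : ∀ i, 0 ≤ L i)
    (hpos : 0 < ∑ i, L i) {φ : ι → ℝ → ℝ} (hφ : ∀ i, IntervalIntegrable (φ i) volume 0 (L i))
    {c D : ℝ} (hc : ∀ i, ∀ t ∈ Icc 0 (L i), |c - φ i t| ≤ D) :
    |c - (∑ i, ∫ t in (0)..(L i), φ i t) / ∑ i, L i| ≤ D := by
  have harc : ∀ i, |L i * c - ∫ t in (0)..(L i), φ i t| ≤ L i * D := fun i => by
    have hbound : ∀ t ∈ uIoc 0 (L i), ‖c - φ i t‖ ≤ D := fun t ht => by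
      rw [uIoc_of_le (hL i)] at ht
      exact hc i t (Ioc_subset_Icc_self ht)
    have := intervalIntegral.norm_integral_le_of_norm_le_const hbound
    rwa [intervalIntegral.integral_sub intervalIntegrable_const (hφ i),
      intervalIntegral.integral_const, smul_eq_mul, sub_zero, norm_eq_abs, abs_of_nonneg (hL i),
      mul_comm D] at this
  have hsum : |(∑ i, L i) * c - ∑ i, ∫ t in (0)..(L i), φ i t| ≤ (∑ i, L i) * D := by
    rw [Finset.sum_mul, Finset.sum_mul, ← Finset.sum_sub_distrib]
    exact (Finset.abs_sum_le_sum_abs _ _).trans (Finset.sum_le_sum fun i _ => harc i)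
  rwa [← mul_div_cancel_left₀ c hpos.ne', ← sub_div, abs_div, abs_of_pos hpos,
    div_le_iff₀ hpos, mul_comm D]

section IntersectionGraph

variable {X ι : Type*} {K : ι → Set X}

def intersectionGraph (K : ι → Set X) : SimpleGraph ι :=
  SimpleGraph.fromRel fun i j => (K i ∩ K j).Nonempty

theorem intersectionGraph_adj {i j : ι} :
    (intersectionGraph K).Adj i j ↔ i ≠ j ∧ (K i ∩ K j).Nonempty := by
  simp [intersectionGraph, SimpleGraph.fromRel_adj, inter_comm (K j)]

theorem intersectionGraph_reachable_of_inter_nonempty {i j : ι} (h : (K i ∩ K j).Nonempty) :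
    (intersectionGraph K).Reachable i j := by
  by_cases hij : i = j
  · exact hij ▸ .refl i
  · exact (intersectionGraph_adj.2 ⟨hij, h⟩).reachable

theorem intersectionGraph_reachable [TopologicalSpace X] [Finite ι]
    (hclosed : ∀ i, IsClosed (K i)) (hne : ∀ i, (K i).Nonempty)
    (hconn : IsPreconnected (⋃ i, K i)) (i j : ι) : (intersectionGraph K).Reachable i j := by
  by_contra hij
  set S := {k | (intersectionGraph K).Reachable i k}
  have hclosed' : ∀ T : Set ι, IsClosed (⋃ k ∈ T, K k) := fun T =>
    T.toFinite.isClosed_biUnion fun k _ => hclosed k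
  have hcover : (⋃ k, K k) ⊆ (⋃ k ∈ S, K k) ∪ ⋃ k ∈ Sᶜ, K k := by
    rw [← biUnion_union, union_compl_self, biUnion_univ]
  obtain ⟨x, hxi⟩ := hne i
  obtain ⟨y, hyj⟩ := hne j
  obtain ⟨z, -, hzS, hzS'⟩ := isPreconnected_closed_iff.1 hconn _ _ (hclosed' S) (hclosed' Sᶜ)
    hcover ⟨x, mem_iUnion_of_mem i hxi, mem_biUnion (.refl i) hxi⟩
    ⟨y, mem_iUnion_of_mem j hyj, mem_biUnion hij hyj⟩
  obtain ⟨k, hk, hzk⟩ := mem_iUnion₂.1 hzS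
  obtain ⟨k', hk', hzk'⟩ := mem_iUnion₂.1 hzS'
  exact hk' (hk.trans (intersectionGraph_reachable_of_inter_nonempty ⟨z, hzk, hzk'⟩))

variable {g : X → ℝ} {E : ι → ℝ}

theorem abs_sub_le_sum_support_map (hE : ∀ i, ∀ x ∈ K i, ∀ y ∈ K i, |g x - g y| ≤ E i)
    {i j : ι} (w : (intersectionGraph K).Walk i j) {x y : X} (hx : x ∈ K i) (hy : y ∈ K j) :
    |g x - g y| ≤ (w.support.map E).sum := by
  induction w generalizing x with
  | nil => simpa using hE _ x hx y hy
  | @cons a b c hab p ih =>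
    obtain ⟨z, hza, hzb⟩ := (intersectionGraph_adj.1 hab).2
    calc |g x - g y| ≤ |g x - g z| + |g z - g y| := abs_sub_le _ _ _
      _ ≤ E a + (p.support.map E).sum := add_le_add (hE a x hx z hza) (ih hzb hy)
      _ = ((SimpleGraph.Walk.cons hab p).support.map E).sum := by simp

theorem abs_sub_le_sum_of_isPreconnected_iUnion [TopologicalSpace X] [Fintype ι]
    (hclosed : ∀ i, IsClosed (K i)) (hne : ∀ i, (K i).Nonempty)
    (hconn : IsPreconnected (⋃ i, K i)) (hE : ∀ i, ∀ x ∈ K i, ∀ y ∈ K i, |g x - g y| ≤ E i)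
    {x y : X} (hx : x ∈ ⋃ i, K i) (hy : y ∈ ⋃ i, K i) : |g x - g y| ≤ ∑ i, E i := by
  classical
  obtain ⟨i, hxi⟩ := mem_iUnion.1 hx
  obtain ⟨j, hyj⟩ := mem_iUnion.1 hy
  obtain ⟨w⟩ := intersectionGraph_reachable hclosed hne hconn i j
  have hE0 : ∀ k, 0 ≤ E k := fun k =>
    let ⟨z, hz⟩ := hne k
    (abs_nonneg _).trans (hE k z hz z hz)
  let p := w.toPath
  calc |g x - g y| ≤ (p.1.support.map E).sum := abs_sub_le_sum_support_map hE p.1 hxi hyj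
    _ = ∑ k ∈ p.1.support.toFinset, E k := (List.sum_toFinset E p.2.support_nodup).symm
    _ ≤ ∑ k, E k := Finset.sum_le_univ_sum_of_nonneg hE0

end IntersectionGraph

theorem pattern_poincare_inequality_general (N : ℕ) (L : Fin N → ℝ)
    (hL : ∀ i, 0 < L i)
    (γ : Fin N → ℝ → EuclideanSpace ℝ (Fin 2))
    (hγ : ∀ i, ContDiffOn ℝ 1 (γ i) (Icc 0 (L i)))
    (hconn : IsConnected (⋃ i, γ i '' Icc 0 (L i)))
    (u : EuclideanSpace ℝ (Fin 2) → ℝ)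
    (hu : ∀ i, ContDiffOn ℝ 1 (u ∘ γ i) (Icc 0 (L i)))
    (l : ℝ) (hl : l = ∑ i, L i) :
    ∑ i, (∫ t in (0:ℝ)..(L i),
        (u (γ i t) - (∑ j, ∫ t in (0:ℝ)..(L j), u (γ j t)) / l) ^ 2)
      ≤ l ^ 2 * ∑ i, ∫ t in (0:ℝ)..(L i),
          (derivWithin (u ∘ γ i) (Icc 0 (L i)) t) ^ 2 := by
  set u' := fun i => derivWithin (u ∘ γ i) (Icc 0 (L i))
  set D := ∑ i, ∫ t in (0:ℝ)..(L i), |u' i t|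
  have hosc : ∀ x ∈ ⋃ i, γ i '' Icc 0 (L i), ∀ y ∈ ⋃ i, γ i '' Icc 0 (L i), |u x - u y| ≤ D :=
    fun x hx y hy => abs_sub_le_sum_of_isPreconnected_iUnion
      (fun i => (isCompact_Icc.image_of_continuousOn (hγ i).continuousOn).isClosed)
      (fun i => (nonempty_Icc.2 (hL i).le).image _) hconn.isPreconnected
      (by rintro i _ ⟨s, hs, rfl⟩ _ ⟨t, ht, rfl⟩
          exact abs_sub_le_integral_abs_derivWithin (hL i) (hu i) ht hs) hx hy
  have hΓ : ∀ i, ∀ t ∈ Icc 0 (L i), γ i t ∈ ⋃ j, γ j '' Icc 0 (L j) := fun i t ht =>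
    mem_iUnion_of_mem i (mem_image_of_mem (γ i) ht)
  have hmean : ∀ i, ∀ t ∈ Icc 0 (L i),
      |u (γ i t) - (∑ j, ∫ t in (0:ℝ)..(L j), u (γ j t)) / l| ≤ D := fun i t ht =>
    hl ▸ abs_sub_sum_integral_div_le (fun j => (hL j).le)
      (Finset.sum_pos (fun j _ => hL j) ⟨i, Finset.mem_univ i⟩)
      (fun j => (hu j).continuousOn.intervalIntegrable_of_Icc (hL j).le)
      fun j s hs => hosc _ (hΓ i t ht) _ (hΓ j s hs)
  have hD : D ^ 2 ≤ l * ∑ i, ∫ t in (0:ℝ)..(L i), u' i t ^ 2 :=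
    hl ▸ sq_sum_integral_abs_le (fun i => (hL i).le) fun i =>
      (hu i).continuousOn_derivWithin (uniqueDiffOn_Icc (hL i)) le_rfl
  calc _ ≤ ∑ i, L i * D ^ 2 := Finset.sum_le_sum fun i _ => by
        simpa only [sub_zero] using integral_sq_le_of_abs_le (hL i).le (hmean i)
    _ = l * D ^ 2 := by rw [← Finset.sum_mul, hl]
    _ ≤ l * (l * ∑ i, ∫ t in (0:ℝ)..(L i), u' i t ^ 2) :=
      mul_le_mul_of_nonneg_left hD (hl ▸ Finset.sum_nonneg fun i _ => (hL i).le)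
    _ = _ := by ring

/-- Poincaré inequality on bounded connected patterns: let `Γ = ⋃ γ_i([0, L i])` be a finite
connected union of `C¹` arcs parametrized by arc length, of total length `l = ∑ L i`. Then
for every `u` that is `H¹` on each arc (values automatically match at intersections, since
`u` is defined on the plane),
`∫_Γ (u − ⟨u⟩)² ds ≤ l² ∫_Γ u_s² ds`, where `⟨u⟩ = (1/l) ∫_Γ u ds`. -/
theorem pattern_poincare_inequality (N : ℕ) (hN : 0 < N) (L : Fin N → ℝ)
    (hL : ∀ i, 0 < L i)
    (γ : Fin N → ℝ → EuclideanSpace ℝ (Fin 2))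
    (hγ : ∀ i, ContDiffOn ℝ 1 (γ i) (Icc 0 (L i)))
    (hunit : ∀ i, ∀ t ∈ Icc (0:ℝ) (L i), ‖derivWithin (γ i) (Icc 0 (L i)) t‖ = 1)
    (hconn : IsConnected (⋃ i, γ i '' Icc 0 (L i)))
    (u : EuclideanSpace ℝ (Fin 2) → ℝ)
    (hu : ∀ i, ContDiffOn ℝ 1 (u ∘ γ i) (Icc 0 (L i)))
    (l : ℝ) (hl : l = ∑ i, L i) :
    ∑ i, (∫ t in (0:ℝ)..(L i),
        (u (γ i t) - (∑ j, ∫ t in (0:ℝ)..(L j), u (γ j t)) / l) ^ 2)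
      ≤ l ^ 2 * ∑ i, ∫ t in (0:ℝ)..(L i),
          (derivWithin (u ∘ γ i) (Icc 0 (L i)) t) ^ 2 :=
  pattern_poincare_inequality_general N L hL γ hγ hconn u hu l hl
end
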